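/- Let p be a prime, S a non-abelian finite simple group, and G a finite group having a normal subgroup N isomorphic to S × S. Let m denote the number of orbits of the natural action of Aut(S) on the set of conjugacy classes of p-regular elements of S. Then k_{p'}(G) ≥ m(m+1)/2. -/

import Mathlib

/-!
As `S` is simple with trivial centre, every nontrivial normal subgroup of `S × S` contains one of
the two factors. So the image of one factor under an automorphism of `S × S` contains a factor,
and the image of the other factor lies in its centraliser, which is the remaining factor. Hence
every automorphism of `S × S` is `(x, y) ↦ (α x, β y)` or `(x, y) ↦ (β y, α x)` with
`α, β ∈ Aut(S)`. Conjugation by `G` induces automorphisms of `N ≅ S × S`, so the class in `G` of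
`(a, b) ∈ N` determines the unordered pair of `Aut(S)`-orbits of the classes of `a` and `b`.
Choosing a `p`-regular representative `x O` in each of the `m` orbits `O`, the classes of
`(x O, x O')` for unordered pairs `{O, O'}` are `m(m+1)/2` distinct `p`-regular classes of `G`.
-/

/-- `k_{p'}(G)`: the number of conjugacy classes of `G` consisting of `p`-regular
elements (elements of order not divisible by `p`). -/
noncomputable def kpReg (p : ℕ) (G : Type*) [Group G] : ℕ :=
  Nat.card {c : ConjClasses G // ∀ g ∈ c.carrier, ¬ p ∣ orderOf g}

open Function ConjClasses
open scoped commutatorElement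

section

variable {S T : Type*} [Group S] [Group T]

theorem Subgroup.center_eq_bot_of_isSimpleGroup [IsSimpleGroup S]
    (hnab : ∃ a b : S, a * b ≠ b * a) : Subgroup.center S = ⊥ := by
  refine (IsSimpleGroup.eq_bot_or_eq_top_of_normal _ inferInstance).resolve_right fun htop => ?_
  obtain ⟨a, b, hab⟩ := hnab
  exact hab (Subgroup.mem_center_iff.mp (htop ▸ Subgroup.mem_top b) a)

theorem Prod.fst_eq_one_of_forall_commute (hZ : Subgroup.center S = ⊥) {u : S × T}
    (h : ∀ s : S, Commute u (s, 1)) : u.1 = 1 := by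
  have hu : u.1 ∈ Subgroup.center S :=
    Subgroup.mem_center_iff.mpr fun s => (Prod.commute_iff.mp (h s)).1.eq.symm
  rwa [hZ, Subgroup.mem_bot] at hu

theorem Prod.snd_eq_one_of_forall_commute (hZ : Subgroup.center S = ⊥) {u : T × S}
    (h : ∀ s : S, Commute u (1, s)) : u.2 = 1 := by
  have hu : u.2 ∈ Subgroup.center S :=
    Subgroup.mem_center_iff.mpr fun s => (Prod.commute_iff.mp (h s)).2.eq.symm
  rwa [hZ, Subgroup.mem_bot] at hu

theorem forall_mk_one_mem_of_fst_ne_one [IsSimpleGroup S] (hZ : Subgroup.center S = ⊥)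
    {K : Subgroup (S × T)} [hK : K.Normal] {u : S × T} (hu : u ∈ K) (hu1 : u.1 ≠ 1) :
    ∀ s : S, ((s, 1) : S × T) ∈ K := by
  obtain ⟨t, ht⟩ : ∃ t : S, ¬ Commute u.1 t := by
    by_contra! h
    exact hu1 (Prod.fst_eq_one_of_forall_commute hZ fun s =>
      Commute.prod (h s) (Commute.one_right _))
  have hcomm : ((⁅t, u.1⁆, 1) : S × T) ∈ K := by
    convert K.mul_mem (hK.conj_mem u hu (t, 1)) (K.inv_mem hu) using 1
    ext <;> simp [commutatorElement_def]
  have htop : K.comap (MonoidHom.inl S T) = ⊤ := by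
    refine (IsSimpleGroup.eq_bot_or_eq_top_of_normal _ (Subgroup.normal_comap _)).resolve_left
      fun hbot => ht ?_
    have : ⁅t, u.1⁆ ∈ K.comap (MonoidHom.inl S T) := hcomm
    rw [hbot, Subgroup.mem_bot, commutatorElement_eq_one_iff_mul_comm] at this
    exact this.symm
  exact fun s => (htop ▸ Subgroup.mem_top s : s ∈ K.comap (MonoidHom.inl S T))

theorem forall_mk_one_mem_or_forall_one_mk_mem [IsSimpleGroup S] (hZ : Subgroup.center S = ⊥)
    {K : Subgroup (S × S)} [K.Normal] {u : S × S} (hu : u ∈ K) (hu1 : u ≠ 1) :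
    (∀ s : S, (s, 1) ∈ K) ∨ (∀ s : S, (1, s) ∈ K) := by
  by_cases h1 : u.1 = 1
  · have h2 : u.swap.1 ≠ 1 := fun h2 => hu1 (Prod.ext h1 h2)
    right
    simpa using forall_mk_one_mem_of_fst_ne_one hZ
      (K := K.comap (MulEquiv.prodComm : S × S ≃* S × S).toMonoidHom) (by simpa using hu) h2
  · exact Or.inl (forall_mk_one_mem_of_fst_ne_one hZ hu h1)

theorem MulAut.prod_self_apply_inl_cases [IsSimpleGroup S] (hZ : Subgroup.center S = ⊥)
    (ψ : MulAut (S × S)) : (∀ x : S, (ψ (x, 1)).2 = 1) ∨ (∀ x : S, (ψ (x, 1)).1 = 1) := by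
  obtain ⟨a, ha⟩ := exists_ne (1 : S)
  let K := (MonoidHom.fst S S).ker.map ψ.toMonoidHom
  have : K.Normal := Subgroup.Normal.map inferInstance _ ψ.surjective
  have hcomm : ∀ x : S, ∀ k ∈ K, Commute (ψ (x, 1)) k := by
    rintro x _ ⟨v, hv, rfl⟩
    have hv1 : v.1 = 1 := hv
    exact (Commute.prod (hv1 ▸ Commute.one_right x) (Commute.one_left _)).map ψ
  have hu : ψ (1, a) ∈ K := Subgroup.mem_map_of_mem _ (MonoidHom.mem_ker.mpr rfl)
  rcases forall_mk_one_mem_or_forall_one_mk_mem hZ hu (by simpa using ha) with h | h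
  · exact Or.inr fun x => Prod.fst_eq_one_of_forall_commute hZ fun s => hcomm x _ (h s)
  · exact Or.inl fun x => Prod.snd_eq_one_of_forall_commute hZ fun s => hcomm x _ (h s)

theorem MonoidHom.eq_one_of_inl_inr {M : Type*} [Monoid M] (f : S × T →* M)
    (h1 : ∀ x : S, f (x, 1) = 1) (h2 : ∀ y : T, f (1, y) = 1) (u : S × T) : f u = 1 := by
  rw [← Prod.fst_mul_snd u, map_mul, h1, h2, one_mul]

theorem MulAut.prod_self_factor_cases [IsSimpleGroup S] (hZ : Subgroup.center S = ⊥)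
    (ψ : MulAut (S × S)) :
    ((∀ x : S, (ψ (x, 1)).2 = 1) ∧ ∀ y : S, (ψ (1, y)).1 = 1) ∨
      ((∀ x : S, (ψ (x, 1)).1 = 1) ∧ ∀ y : S, (ψ (1, y)).2 = 1) := by
  obtain ⟨a, ha⟩ := exists_ne (1 : S)
  rcases MulAut.prod_self_apply_inl_cases hZ ψ with h1 | h1 <;>
    rcases MulAut.prod_self_apply_inl_cases hZ (MulEquiv.prodComm.trans ψ) with h2 | h2
  · exact absurd (by simpa using
      ((MonoidHom.snd S S).comp ψ.toMonoidHom).eq_one_of_inl_inr h1 h2 (ψ.symm (1, a))) ha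
  · exact Or.inl ⟨h1, h2⟩
  · exact Or.inr ⟨h1, h2⟩
  · exact absurd (by simpa using
      ((MonoidHom.fst S S).comp ψ.toMonoidHom).eq_one_of_inl_inr h1 h2 (ψ.symm (a, 1))) ha

theorem MulAut.exists_prod_apply_eq [Finite S] [Finite T] (ψ : MulAut (S × T))
    (h1 : ∀ x : S, (ψ (x, 1)).2 = 1) (h2 : ∀ y : T, (ψ (1, y)).1 = 1) :
    ∃ (α : MulAut S) (β : MulAut T), ∀ x y, ψ (x, y) = (α x, β y) := by
  let f := (MonoidHom.fst S T).comp (ψ.toMonoidHom.comp (MonoidHom.inl S T))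
  let g := (MonoidHom.snd S T).comp (ψ.toMonoidHom.comp (MonoidHom.inr S T))
  have hf : ∀ x, ψ (x, 1) = (f x, 1) := fun x => Prod.ext rfl (h1 x)
  have hg : ∀ y, ψ (1, y) = (1, g y) := fun y => Prod.ext (h2 y) rfl
  have hf_inj : Injective f := (injective_iff_map_eq_one f).mpr fun x hx => by
    simpa using ψ.injective ((hf x).trans (by rw [hx, map_one]; rfl) : ψ (x, 1) = ψ 1)
  have hg_inj : Injective g := (injective_iff_map_eq_one g).mpr fun y hy => by
    simpa using ψ.injective ((hg y).trans (by rw [hy, map_one]; rfl) : ψ (1, y) = ψ 1)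
  refine ⟨MulEquiv.ofBijective f (Finite.injective_iff_bijective.mp hf_inj),
    MulEquiv.ofBijective g (Finite.injective_iff_bijective.mp hg_inj), fun x y => ?_⟩
  rw [← Prod.fst_mul_snd (x, y), map_mul, hf, hg]
  simp

theorem MulAut.prod_self_cases [IsSimpleGroup S] [Finite S] (hZ : Subgroup.center S = ⊥)
    (ψ : MulAut (S × S)) :
    (∃ α β : MulAut S, ∀ x y, ψ (x, y) = (α x, β y)) ∨
      ∃ α β : MulAut S, ∀ x y, ψ (x, y) = (β y, α x) := by
  rcases MulAut.prod_self_factor_cases hZ ψ with ⟨h1, h2⟩ | ⟨h1, h2⟩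
  · exact Or.inl (MulAut.exists_prod_apply_eq ψ h1 h2)
  · obtain ⟨α, β, h⟩ := MulAut.exists_prod_apply_eq (ψ.trans MulEquiv.prodComm) h1 h2
    exact Or.inr ⟨α, β, fun x y => congrArg Prod.swap (h x y)⟩

def ConjClasses.autOrbit (c : ConjClasses S) : Set (ConjClasses S) :=
  Set.range fun φ : MulAut S => ConjClasses.map φ.toMonoidHom c

theorem ConjClasses.autOrbit_mk_apply (φ : MulAut S) (a : S) :
    autOrbit (ConjClasses.mk (φ a)) = autOrbit (ConjClasses.mk a) := by
  rw [autOrbit, autOrbit, ← (mul_right_surjective φ).range_comp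
    fun φ' : MulAut S => ConjClasses.map φ'.toMonoidHom (ConjClasses.mk a)]
  rfl

theorem sym2_autOrbit_eq_of_mulAut_apply_eq [IsSimpleGroup S] [Finite S]
    (hZ : Subgroup.center S = ⊥) (ψ : MulAut (S × S)) {a b c d : S} (h : ψ (a, b) = (c, d)) :
    s(autOrbit (ConjClasses.mk a), autOrbit (ConjClasses.mk b)) =
      s(autOrbit (ConjClasses.mk c), autOrbit (ConjClasses.mk d)) := by
  rcases MulAut.prod_self_cases hZ ψ with ⟨α, β, hψ⟩ | ⟨α, β, hψ⟩ <;>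
    obtain ⟨rfl, rfl⟩ := Prod.ext_iff.mp ((hψ a b).symm.trans h) <;>
    simp only [autOrbit_mk_apply, Sym2.eq_swap]

theorem IsConj.orderOf_eq {G : Type*} [Group G] {g h : G} (hgh : IsConj g h) :
    orderOf g = orderOf h := by
  obtain ⟨c, rfl⟩ := isConj_iff.mp hgh
  exact ((MulAut.conj c).orderOf_eq g).symm

theorem ConjClasses.forall_mem_carrier_mk_not_dvd_orderOf_iff {G : Type*} [Group G] {p : ℕ}
    (g : G) : (∀ h ∈ (ConjClasses.mk g).carrier, ¬ p ∣ orderOf h) ↔ ¬ p ∣ orderOf g := by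
  refine ⟨fun H => H g mem_carrier_mk, fun hg h hh => ?_⟩
  rwa [(mk_eq_mk_iff_isConj.mp (mem_carrier_iff_mk_eq.mp hh)).orderOf_eq]

theorem exists_mulAut_apply_eq_of_isConj {G H : Type*} [Group G] [Group H] {N : Subgroup G}
    [N.Normal] (e : N ≃* H) {u v : H} (h : IsConj (e.symm u : G) (e.symm v)) :
    ∃ ψ : MulAut H, ψ u = v := by
  obtain ⟨g, hg⟩ := isConj_iff.mp h
  have hconj : MulAut.conjNormal g (e.symm u) = e.symm v :=
    Subtype.ext ((MulAut.conjNormal_apply g _).trans hg)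
  exact ⟨(e.symm.trans (MulAut.conjNormal g)).trans e, by simp [hconj]⟩

theorem Nat.card_sym2 {α : Type*} [Finite α] :
    Nat.card (Sym2 α) = Nat.card α * (Nat.card α + 1) / 2 := by
  classical
  have := Fintype.ofFinite α
  rw [Nat.card_eq_fintype_card, Nat.card_eq_fintype_card, Sym2.card, Nat.choose_two_right,
    Nat.add_sub_cancel, mul_comm]

theorem card_sym2_le_kpReg [IsSimpleGroup S] [Finite S] (hZ : Subgroup.center S = ⊥)
    {p : ℕ} (hp : p.Prime) {G : Type*} [Group G] [Finite G] {N : Subgroup G} [N.Normal]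
    (e : N ≃* S × S) {ι : Type*} (c : ι → ConjClasses S)
    (hreg : ∀ i, ∀ g ∈ (c i).carrier, ¬ p ∣ orderOf g) (hc : Injective fun i => autOrbit (c i)) :
    Nat.card (Sym2 ι) ≤ kpReg p G := by
  choose x hx using fun i => (c i).exists_rep
  have hxreg : ∀ i, ¬ p ∣ orderOf (x i) := fun i =>
    (forall_mem_carrier_mk_not_dvd_orderOf_iff (x i)).mp (hx i ▸ hreg i)
  -- `G` need not swap the factors of `N`, so the class may depend on the order chosen by `z.out`
  let pairClass (z : Sym2 ι) : {d : ConjClasses G // ∀ g ∈ d.carrier, ¬ p ∣ orderOf g} :=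
    ⟨ConjClasses.mk (e.symm (x z.out.1, x z.out.2) : G), by
      rw [forall_mem_carrier_mk_not_dvd_orderOf_iff, Subgroup.orderOf_coe, MulEquiv.orderOf_eq,
        Prod.orderOf_mk, hp.dvd_lcm]
      exact not_or.mpr ⟨hxreg _, hxreg _⟩⟩
  refine Nat.card_le_card_of_injective pairClass fun z z' hzz' => ?_
  obtain ⟨ψ, hψ⟩ := exists_mulAut_apply_eq_of_isConj e
    (ConjClasses.mk_eq_mk_iff_isConj.mp (congrArg Subtype.val hzz'))
  have horb := sym2_autOrbit_eq_of_mulAut_apply_eq hZ ψ hψ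
  simp only [hx] at horb
  rw [← Quot.out_eq z, ← Quot.out_eq z']
  exact Sym2.map.injective hc horb

end

/-- Let `p` be a prime, `S` a non-abelian finite simple group, and `G` a finite group
with a normal subgroup `N ≅ S × S`.  Let `m` be the number of orbits of the natural
action of `Aut(S)` on the set of conjugacy classes of `p`-regular elements of `S`.
Then `k_{p'}(G) ≥ m(m+1)/2`. -/
theorem kpReg_ge_of_normal_square_of_simple
    (p : ℕ) (hp : p.Prime) (S : Type*) [Group S] [Finite S]
    (hS : IsSimpleGroup S) (hnab : ∃ a b : S, a * b ≠ b * a)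
    (G : Type*) [Group G] [Finite G] (N : Subgroup G) (hN : N.Normal)
    (hiso : Nonempty (N ≃* (S × S)))
    (m : ℕ)
    (hm : m = Nat.card {O : Set (ConjClasses S) // ∃ c : ConjClasses S,
        (∀ g ∈ c.carrier, ¬ p ∣ orderOf g) ∧
        O = {d : ConjClasses S | ∃ φ : MulAut S, ConjClasses.map φ.toMonoidHom c = d}}) :
    m * (m + 1) / 2 ≤ kpReg p G := by
  obtain ⟨e⟩ := hiso
  rw [hm, ← Nat.card_sym2]
  exact card_sym2_le_kpReg (Subgroup.center_eq_bot_of_isSimpleGroup hnab) hp e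
    (fun O => O.2.choose) (fun O => O.2.choose_spec.1)
    fun O O' h => Subtype.ext (O.2.choose_spec.2.trans (h.trans O'.2.choose_spec.2.symm))
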